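/- Let a, b, y, y′ be points of the hyperbolic plane ℍ such that b is the midpoint of y and y′ (dist y b = dist b y′ = (1/2)·dist y y′). Suppose that for every point p on the geodesic segment from b to y (i.e., every p with dist b p + dist p y = dist b y) one has dist a b ≤ dist a p. Then dist a y′ ≤ dist a y. -/

import Mathlib

/-!
In the hyperboloid model `cosh (dist a ·)` is the restriction of a linear functional, so for
`q` on the geodesic segment `[p, r]` the value `cosh (dist a q)` is the combination of the values
at `p` and `r` given by the hyperbolic Stewart relation. For the midpoint `b` of
`[y, y']` it yields `cosh d(a,y) + cosh d(a,y') = 2 cosh d(a,b) cosh d(b,y)`. Since `dist a ·`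
restricted to `[b, y]` is minimal at `b`, its one-sided derivative at `b` is nonnegative, which
is the inequality `cosh d(a,b) cosh d(b,y) ≤ cosh d(a,y)` (the angle at `b` is not acute).
Together they give `cosh d(a,y') ≤ cosh d(a,y)`.
-/

open Real Filter Topology

def minkowski (u v : Fin 3 → ℝ) : ℝ := u 0 * v 0 + u 1 * v 1 - u 2 * v 2

theorem eq_zero_of_minkowski_self_eq_zero_of_minkowski_eq_zero {u w : Fin 3 → ℝ}
    (hu : minkowski u u < 0) (hw : minkowski w w = 0) (huw : minkowski w u = 0) : w = 0 := by
  simp only [minkowski] at hu hw huw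
  have hw₂ : w 2 = 0 := by
    by_contra h
    have hpos : 0 < w 2 ^ 2 * (u 2 * u 2 - u 0 * u 0 - u 1 * u 1) :=
      mul_pos (by positivity) (by linarith)
    have lagrange :
        w 2 ^ 2 * (u 2 * u 2 - u 0 * u 0 - u 1 * u 1) = -(w 0 * u 1 - w 1 * u 0) ^ 2 := by
      linear_combination (-(w 2 * u 2 + w 0 * u 0 + w 1 * u 1)) * huw
        + (u 0 * u 0 + u 1 * u 1) * hw
    nlinarith [sq_nonneg (w 0 * u 1 - w 1 * u 0)]
  have hw₀ : w 0 = 0 := by nlinarith [sq_nonneg (w 0), sq_nonneg (w 1)]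
  have hw₁ : w 1 = 0 := by nlinarith [sq_nonneg (w 0), sq_nonneg (w 1)]
  ext i
  fin_cases i <;> assumption

/-- The right derivative at `0` of `A * sinh (s - t) + C * sinh t` is `C - A * cosh s`. -/
theorem Real.mul_cosh_le_of_forall_mul_sinh_le {A C s : ℝ} (hs : 0 < s)
    (h : ∀ t ∈ Set.Ioc 0 s, A * sinh s ≤ A * sinh (s - t) + C * sinh t) : A * cosh s ≤ C := by
  have half : ∀ t ∈ Set.Ioc 0 s, A * cosh (s - t / 2) ≤ C * cosh (t / 2) := by
    intro t ht
    have e₁ : sinh s = sinh (s - t / 2) * cosh (t / 2) + cosh (s - t / 2) * sinh (t / 2) := by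
      rw [← sinh_add]; congr 1; ring
    have e₂ : sinh (s - t) = sinh (s - t / 2) * cosh (t / 2) - cosh (s - t / 2) * sinh (t / 2) := by
      rw [← sinh_sub]; congr 1; ring
    have e₃ : sinh t = 2 * sinh (t / 2) * cosh (t / 2) := by
      rw [← sinh_two_mul]; congr 1; ring
    have key := h t ht
    rw [e₁, e₂, e₃] at key
    have hσ : 0 < 2 * sinh (t / 2) := by
      have := sinh_pos_iff.mpr (half_pos ht.1)
      positivity
    refine le_of_mul_le_mul_right ?_ hσ
    linarith
  have hlim : ∀ f : ℝ → ℝ, Continuous f → Tendsto f (𝓝[>] 0) (𝓝 (f 0)) := fun f hf =>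
    hf.continuousAt.tendsto.mono_left nhdsWithin_le_nhds
  have h₁ := hlim (fun t => A * cosh (s - t / 2)) (by fun_prop)
  have h₂ := hlim (fun t => C * cosh (t / 2)) (by fun_prop)
  simp only [zero_div, sub_zero, cosh_zero, mul_one] at h₁ h₂
  exact le_of_tendsto_of_tendsto h₁ h₂ (eventually_of_mem (Ioc_mem_nhdsGT hs) half)

namespace UpperHalfPlane

noncomputable def toHyperboloid (z : ℍ) : Fin 3 → ℝ :=
  ![z.re / z.im, (z.re ^ 2 + z.im ^ 2 - 1) / (2 * z.im), (z.re ^ 2 + z.im ^ 2 + 1) / (2 * z.im)]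

theorem minkowski_toHyperboloid (z w : ℍ) :
    minkowski (toHyperboloid z) (toHyperboloid w) = -cosh (dist z w) := by
  have := z.im_pos.ne'
  have := w.im_pos.ne'
  rw [cosh_dist']
  simp only [minkowski, toHyperboloid, Matrix.cons_val]
  field_simp
  ring

theorem minkowski_toHyperboloid_self (z : ℍ) :
    minkowski (toHyperboloid z) (toHyperboloid z) = -1 := by
  rw [minkowski_toHyperboloid, dist_self, cosh_zero]

theorem toHyperboloid_two_pos (z : ℍ) : 0 < toHyperboloid z 2 := by
  have := z.im_pos
  simp only [toHyperboloid, Matrix.cons_val]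
  positivity

theorem exists_toHyperboloid_eq {v : Fin 3 → ℝ} (hv : minkowski v v = -1) (h₂ : 0 < v 2) :
    ∃ z : ℍ, toHyperboloid z = v := by
  simp only [minkowski] at hv
  have hpos : 0 < v 2 - v 1 := by nlinarith [sq_nonneg (v 0)]
  refine ⟨⟨⟨v 0 / (v 2 - v 1), 1 / (v 2 - v 1)⟩, by simpa using hpos⟩, ?_⟩
  ext i
  fin_cases i <;> simp only [toHyperboloid, re, im, Fin.zero_eta, Fin.mk_one, Fin.reduceFinMk,
    Matrix.cons_val] <;> field_simp <;> linear_combination hv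

theorem cosh_dist_mul_sinh_dist_eq {p q r : ℍ} (h : dist p q + dist q r = dist p r) (a : ℍ) :
    cosh (dist a q) * sinh (dist p r)
      = cosh (dist a p) * sinh (dist q r) + cosh (dist a r) * sinh (dist p q) := by
  rw [← h]
  set d₁ := dist p q
  set d₂ := dist q r
  have hpr := minkowski_toHyperboloid p r
  rw [← h, cosh_add] at hpr
  have hW : sinh d₂ • toHyperboloid p + sinh d₁ • toHyperboloid r
      - sinh (d₁ + d₂) • toHyperboloid q = 0 := by
    have hpp := minkowski_toHyperboloid_self p
    have hqq := minkowski_toHyperboloid_self q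
    have hrr := minkowski_toHyperboloid_self r
    have hpq := minkowski_toHyperboloid p q
    have hqr := minkowski_toHyperboloid q r
    apply eq_zero_of_minkowski_self_eq_zero_of_minkowski_eq_zero (u := toHyperboloid q)
    · rw [hqq]; norm_num
    · simp only [minkowski, Pi.add_apply, Pi.sub_apply, Pi.smul_apply, smul_eq_mul, sinh_add]
        at hpp hqq hrr hpq hqr hpr ⊢
      linear_combination (sinh d₂) ^ 2 * hpp + (sinh d₁) ^ 2 * hrr
        + (sinh d₁ * cosh d₂ + cosh d₁ * sinh d₂) ^ 2 * hqq + 2 * sinh d₁ * sinh d₂ * hpr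
        - 2 * sinh d₂ * (sinh d₁ * cosh d₂ + cosh d₁ * sinh d₂) * hpq
        - 2 * sinh d₁ * (sinh d₁ * cosh d₂ + cosh d₁ * sinh d₂) * hqr
        + (sinh d₂) ^ 2 * cosh_sq d₁ + (sinh d₁) ^ 2 * cosh_sq d₂
    · simp only [minkowski, Pi.add_apply, Pi.sub_apply, Pi.smul_apply, smul_eq_mul, sinh_add]
        at hqq hpq hqr ⊢
      linear_combination sinh d₂ * hpq + sinh d₁ * hqr
        - (sinh d₁ * cosh d₂ + cosh d₁ * sinh d₂) * hqq
  have hap := minkowski_toHyperboloid a p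
  have haq := minkowski_toHyperboloid a q
  have har := minkowski_toHyperboloid a r
  have haW := congrArg (minkowski (toHyperboloid a)) hW
  simp only [minkowski, Pi.add_apply, Pi.sub_apply, Pi.smul_apply, smul_eq_mul, Pi.zero_apply]
    at hap haq har haW
  linear_combination haW + sinh (d₁ + d₂) * haq - sinh d₂ * hap - sinh d₁ * har

theorem exists_dist_eq_and_dist_eq_sub (z w : ℍ) {t : ℝ} (ht₀ : 0 ≤ t) (ht : t ≤ dist z w) :
    ∃ p : ℍ, dist z p = t ∧ dist p w = dist z w - t := by
  rcases ht₀.eq_or_lt with rfl | ht₀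
  · exact ⟨z, dist_self z, (sub_zero _).symm⟩
  set s := dist z w
  have hs : 0 < sinh s := sinh_pos_iff.mpr (ht₀.trans_le ht)
  have hcosh : sinh (s - t) / sinh s + sinh t / sinh s * cosh s = cosh t := by
    field_simp
    rw [sinh_sub]
    ring
  have hcosh_sub : sinh (s - t) / sinh s * cosh s + sinh t / sinh s = cosh (s - t) := by
    field_simp
    rw [sinh_sub, cosh_sub]
    linear_combination (-sinh t) * cosh_sq s
  have hnorm : (sinh (s - t) / sinh s) ^ 2 + (sinh t / sinh s) ^ 2
      + 2 * (sinh (s - t) / sinh s) * (sinh t / sinh s) * cosh s = 1 := by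
    field_simp
    rw [sinh_sub]
    linear_combination (-(sinh t) ^ 2) * cosh_sq s + (sinh s) ^ 2 * cosh_sq t
  set α := sinh (s - t) / sinh s
  set β := sinh t / sinh s
  have hα : 0 ≤ α := div_nonneg (sinh_nonneg_iff.mpr (sub_nonneg.mpr ht)) hs.le
  have hβ : 0 < β := div_pos (sinh_pos_iff.mpr ht₀) hs
  have hzz := minkowski_toHyperboloid_self z
  have hww := minkowski_toHyperboloid_self w
  have hzw := minkowski_toHyperboloid z w
  obtain ⟨p, hp⟩ := exists_toHyperboloid_eq (v := α • toHyperboloid z + β • toHyperboloid w)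
    (by
      simp only [minkowski, Pi.add_apply, Pi.smul_apply, smul_eq_mul] at hzz hww hzw ⊢
      linear_combination α ^ 2 * hzz + β ^ 2 * hww + 2 * α * β * hzw - hnorm)
    (by
      have := toHyperboloid_two_pos z
      have := toHyperboloid_two_pos w
      simp only [Pi.add_apply, Pi.smul_apply, smul_eq_mul]
      positivity)
  have hzp := minkowski_toHyperboloid z p
  have hpw := minkowski_toHyperboloid p w
  rw [hp] at hzp hpw
  simp only [minkowski, Pi.add_apply, Pi.smul_apply, smul_eq_mul] at hzz hww hzw hzp hpw
  refine ⟨p, cosh_injOn dist_nonneg ht₀.le ?_, cosh_injOn dist_nonneg (sub_nonneg.mpr ht) ?_⟩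
  · linear_combination hzp - α * hzz - β * hzw + hcosh
  · linear_combination hpw - α * hzw - β * hww + hcosh_sub

theorem cosh_dist_add_cosh_dist_eq_of_midpoint {y b y' : ℍ}
    (hyy' : dist y b + dist b y' = dist y y') (hb : dist y b = dist b y') (a : ℍ) :
    cosh (dist a y) + cosh (dist a y') = 2 * cosh (dist a b) * cosh (dist b y) := by
  rw [dist_comm b y]
  rcases (dist_nonneg : 0 ≤ dist y b).eq_or_lt with hs | hs
  · obtain rfl := dist_eq_zero.mp hs.symm
    obtain rfl := dist_eq_zero.mp (hb ▸ hs).symm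
    rw [dist_self, cosh_zero]
    ring
  have stewart := cosh_dist_mul_sinh_dist_eq hyy' a
  rw [← hyy', ← hb, ← two_mul, sinh_two_mul] at stewart
  refine mul_right_cancel₀ (sinh_pos_iff.mpr hs).ne' ?_
  linear_combination -stewart

theorem cosh_dist_mul_cosh_dist_le {a b y : ℍ}
    (hmin : ∀ p : ℍ, dist b p + dist p y = dist b y → dist a b ≤ dist a p) :
    cosh (dist a b) * cosh (dist b y) ≤ cosh (dist a y) := by
  rcases (dist_nonneg : 0 ≤ dist b y).eq_or_lt with hs | hs
  · obtain rfl := dist_eq_zero.mp hs.symm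
    rw [dist_self, cosh_zero, mul_one]
  refine mul_cosh_le_of_forall_mul_sinh_le hs fun t ht => ?_
  obtain ⟨p, hbp, hpy⟩ := exists_dist_eq_and_dist_eq_sub b y ht.1.le ht.2
  have hseg : dist b p + dist p y = dist b y := by rw [hbp, hpy]; ring
  have stewart := cosh_dist_mul_sinh_dist_eq hseg a
  rw [hbp, hpy] at stewart
  have hle : cosh (dist a b) ≤ cosh (dist a p) := by
    rw [cosh_le_cosh, abs_of_nonneg dist_nonneg, abs_of_nonneg dist_nonneg]
    exact hmin p hseg
  exact (mul_le_mul_of_nonneg_right hle (sinh_pos_iff.mpr hs).le).trans_eq stewart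

end UpperHalfPlane

/-- In the hyperbolic plane, let `b` be the midpoint of `y` and `y'`. If for every point `p`
on the geodesic segment from `b` to `y` one has `dist a b ≤ dist a p`, then
`dist a y' ≤ dist a y`. -/
theorem hyperbolic_appendix_case_i
    (a b y y' : UpperHalfPlane)
    (hb1 : dist y b = dist b y') (hb2 : dist b y' = (1 / 2) * dist y y')
    (hmin : ∀ p : UpperHalfPlane, dist b p + dist p y = dist b y → dist a b ≤ dist a p) :
    dist a y' ≤ dist a y := by
  have hyy' : dist y b + dist b y' = dist y y' := by linarith
  have median := UpperHalfPlane.cosh_dist_add_cosh_dist_eq_of_midpoint hyy' hb1 a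
  have obtuse := UpperHalfPlane.cosh_dist_mul_cosh_dist_le hmin
  have hcosh : cosh (dist a y') ≤ cosh (dist a y) := by linarith
  rwa [cosh_le_cosh, abs_of_nonneg dist_nonneg, abs_of_nonneg dist_nonneg] at hcosh
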